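/- Fix M > 0 and L > 2M, and let E be the periodic Schwarzschild Ernst potential with mass M and period L. Then E(x,ρ) > 0 for every (x,ρ) with ρ > 0, E(x,0) > 0 whenever M < |x − nL| for all n ∈ ℤ, and E(x,0) = 0 whenever |x − nL| < M for some n ∈ ℤ. -/

import Mathlib

/-- The Schwarzschild Ernst potential with mass `M`:
`E₀(x,ρ) = (r₁ + r₂ − 2M)/(r₁ + r₂ + 2M)` with `r₁ = √((x−M)²+ρ²)`, `r₂ = √((x+M)²+ρ²)`. -/
noncomputable def schwE (M x ρ : ℝ) : ℝ :=
  (Real.sqrt ((x - M)^2 + ρ^2) + Real.sqrt ((x + M)^2 + ρ^2) - 2*M) /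
  (Real.sqrt ((x - M)^2 + ρ^2) + Real.sqrt ((x + M)^2 + ρ^2) + 2*M)

/-- The logarithm `ω₀ = log E₀` of the Schwarzschild Ernst potential. -/
noncomputable def schwOmega (M x ρ : ℝ) : ℝ := Real.log (schwE M x ρ)

/-- The periodic Schwarzschild Ernst potential with mass `M` and period `L`:
`E(x,ρ) = E₀(x,ρ) ∏_{n=1}^∞ E₀(x+nL,ρ) E₀(x−nL,ρ) exp(4M/(nL))`. -/
noncomputable def perE (M L x ρ : ℝ) : ℝ :=
  schwE M x ρ * ∏' n : ℕ,
    (schwE M (x + ((n : ℝ) + 1) * L) ρ * schwE M (x - ((n : ℝ) + 1) * L) ρ *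
      Real.exp (4*M / (((n : ℝ) + 1) * L)))

/-- The logarithm of the periodic Schwarzschild Ernst potential:
`ω(x,ρ) = ω₀(x,ρ) + ∑_{n=1}^∞ [ω₀(x+nL,ρ) + ω₀(x−nL,ρ) + 4M/(nL)]`. -/
noncomputable def perOmega (M L x ρ : ℝ) : ℝ :=
  schwOmega M x ρ + ∑' n : ℕ,
    (schwOmega M (x + ((n : ℝ) + 1) * L) ρ + schwOmega M (x - ((n : ℝ) + 1) * L) ρ +
      4*M / (((n : ℝ) + 1) * L))

/-!
Off the horizon every factor `E₀` is positive, and `log E₀(y, ρ) = -2M/|y| + O(1/y²)`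
as `|y| → ∞`, because `r₁ + r₂ = 2|y| + O(1)`. In the logarithm of the `n`-th factor of `E`
the two terms `-2M/|x ± nL|` cancel the convergence factor `4M/(nL)` up to a second difference
of `t ↦ 1/t`, so these logarithms are `O(1/n²)` and summable; hence `E = exp ω > 0`.
On a horizon rod `r₁ + r₂ = 2M`, so one factor, and with it the whole product, vanishes.
-/

open Real Filter

section LinearOrderedField

variable {α : Type*} [Field α] [LinearOrder α] [IsStrictOrderedRing α]

lemma abs_sub_add_abs_add (a b : α) : |a - b| + |a + b| = 2 * max |a| |b| := by
  rcases abs_cases a with ⟨ha, _⟩ | ⟨ha, _⟩ <;> rcases abs_cases b with ⟨hb, _⟩ | ⟨hb, _⟩ <;>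
    rcases abs_cases (a - b) with ⟨h1, _⟩ | ⟨h1, _⟩ <;>
    rcases abs_cases (a + b) with ⟨h2, _⟩ | ⟨h2, _⟩ <;>
    rcases max_cases |a| |b| with ⟨h3, _⟩ | ⟨h3, _⟩ <;> linarith

lemma abs_inv_add_inv_sub_two_div_le {t x : α} (ht : 0 < t) (hx : 2 * |x| ≤ t) :
    |(t + x)⁻¹ + (t - x)⁻¹ - 2 / t| ≤ 3 * x ^ 2 / t ^ 3 := by
  obtain ⟨hx1, hx2⟩ := abs_le.mp (show |x| ≤ t / 2 by linarith)
  have hx2' : x ^ 2 ≤ t ^ 2 / 4 := by nlinarith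
  have htx : 0 < t ^ 2 - x ^ 2 := by nlinarith
  have hid : (t + x)⁻¹ + (t - x)⁻¹ - 2 / t = 2 * x ^ 2 / (t * (t ^ 2 - x ^ 2)) := by
    field_simp [(by linarith : t + x ≠ 0), (by linarith : t - x ≠ 0)]
    ring
  rw [hid, abs_of_nonneg (by positivity), div_le_div_iff₀ (by positivity) (by positivity)]
  nlinarith [mul_nonneg (sq_nonneg x) (sq_nonneg t)]

end LinearOrderedField

/-- `r₁ + r₂`: the sum of the distances from `(y, ρ)` to the rod ends `(± M, 0)`. -/
noncomputable def schwDist (M y ρ : ℝ) : ℝ := √((y - M) ^ 2 + ρ ^ 2) + √((y + M) ^ 2 + ρ ^ 2)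

lemma schwE_eq (M y ρ : ℝ) :
    schwE M y ρ = (schwDist M y ρ - 2 * M) / (schwDist M y ρ + 2 * M) := rfl

lemma sqrt_sq_add_sq_le (a b : ℝ) : √(a ^ 2 + b ^ 2) ≤ |a| + |b| :=
  (sqrt_le_left (by positivity)).mpr (by nlinarith [sq_abs a, sq_abs b, abs_nonneg a, abs_nonneg b])

section schwDist

variable {M y ρ : ℝ}

lemma two_mul_max_le_schwDist : 2 * max |y| |M| ≤ schwDist M y ρ := by
  rw [← abs_sub_add_abs_add]
  exact add_le_add (abs_le_sqrt (by nlinarith)) (abs_le_sqrt (by nlinarith))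

lemma two_mul_max_lt_schwDist (hρ : ρ ≠ 0) : 2 * max |y| |M| < schwDist M y ρ := by
  have hρ2 : 0 < ρ ^ 2 := by positivity
  rw [← abs_sub_add_abs_add]
  exact add_lt_add ((lt_sqrt (abs_nonneg _)).mpr (by rw [sq_abs]; linarith))
    ((lt_sqrt (abs_nonneg _)).mpr (by rw [sq_abs]; linarith))

lemma schwDist_le (hρ : 0 ≤ ρ) : schwDist M y ρ ≤ 2 * max |y| |M| + 2 * ρ := by
  rw [← abs_sub_add_abs_add]
  have h1 := sqrt_sq_add_sq_le (y - M) ρ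
  have h2 := sqrt_sq_add_sq_le (y + M) ρ
  rw [abs_of_nonneg hρ] at h1 h2
  unfold schwDist
  linarith

lemma schwDist_zero (M y : ℝ) : schwDist M y 0 = 2 * max |y| |M| := by
  simp [schwDist, sqrt_sq_eq_abs, abs_sub_add_abs_add]

end schwDist

lemma schwE_pos {M y ρ : ℝ} (hM : 0 < M) (h : 0 < ρ ∨ M < |y|) : 0 < schwE M y ρ := by
  have hR : 2 * M < schwDist M y ρ := by
    rcases h with hρ | hy
    · calc 2 * M ≤ 2 * max |y| |M| := by rw [abs_of_pos hM]; linarith [le_max_right |y| M]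
        _ < schwDist M y ρ := two_mul_max_lt_schwDist hρ.ne'
    · calc 2 * M < 2 * max |y| |M| := by linarith [le_max_left |y| |M|]
        _ ≤ schwDist M y ρ := two_mul_max_le_schwDist
  rw [schwE_eq]
  exact div_pos (by linarith) (by linarith)

lemma schwE_eq_zero {M y : ℝ} (h : |y| ≤ M) : schwE M y 0 = 0 := by
  have hM : |M| = M := abs_of_nonneg ((abs_nonneg y).trans h)
  rw [schwE_eq, schwDist_zero, hM, max_eq_right h, sub_self, zero_div]

lemma neg_two_mul_div_sub_le_log_div {a R : ℝ} (h : |a| < R) :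
    -(2 * a / (R - a)) ≤ log ((R - a) / (R + a)) := by
  obtain ⟨h1, h2⟩ := abs_lt.mp h
  have hR1 : 0 < R - a := by linarith
  have hR2 : 0 < R + a := by linarith
  have := one_sub_inv_le_log_of_pos (div_pos hR1 hR2)
  rw [inv_div] at this
  convert this using 1
  field_simp
  ring

lemma log_div_le_neg_two_mul_div_add {a R : ℝ} (h : |a| < R) :
    log ((R - a) / (R + a)) ≤ -(2 * a / (R + a)) := by
  obtain ⟨h1, h2⟩ := abs_lt.mp h
  have hR1 : 0 < R - a := by linarith
  have hR2 : 0 < R + a := by linarith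
  convert log_le_sub_one_of_pos (div_pos hR1 hR2) using 1
  field_simp
  ring

lemma abs_schwOmega_add_le {M y ρ : ℝ} (hM : 0 < M) (hρ : 0 ≤ ρ) (hy : 2 * M ≤ |y|) :
    |schwOmega M y ρ + 2 * M / (|y|)| ≤ 2 * M * (2 * M + ρ) / y ^ 2 := by
  set s := |y|
  set R := schwDist M y ρ
  have hMs : max s |M| = s := max_eq_left (by rw [abs_of_pos hM]; linarith)
  have hR1 : 2 * s ≤ R := hMs ▸ two_mul_max_le_schwDist
  have hR2 : R ≤ 2 * s + 2 * ρ := hMs ▸ schwDist_le hρ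
  have h2M : |2 * M| < R := by rw [abs_of_pos (by linarith)]; linarith
  have hω : schwOmega M y ρ = log ((R - 2 * M) / (R + 2 * M)) := rfl
  have hup : schwOmega M y ρ ≤ -(2 * M / (s + M + ρ)) := by
    refine hω ▸ (log_div_le_neg_two_mul_div_add h2M).trans ?_
    rw [neg_le_neg_iff]
    calc 2 * M / (s + M + ρ) = 2 * (2 * M) / (2 * s + 2 * ρ + 2 * M) := by field_simp; ring
      _ ≤ 2 * (2 * M) / (R + 2 * M) :=
          div_le_div_of_nonneg_left (by positivity) (by linarith) (by linarith)
  have hlo : -(2 * M / (s - M)) ≤ schwOmega M y ρ := by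
    refine hω ▸ le_trans ?_ (neg_two_mul_div_sub_le_log_div h2M)
    rw [neg_le_neg_iff]
    calc 2 * (2 * M) / (R - 2 * M) ≤ 2 * (2 * M) / (2 * s - 2 * M) :=
          div_le_div_of_nonneg_left (by positivity) (by linarith) (by linarith)
      _ = 2 * M / (s - M) := by field_simp
  have hs : 0 < s := by linarith
  have hsM : 0 < s - M := by linarith
  have hlo' : 2 * M / (s - M) - 2 * M / s ≤ 2 * M * (2 * M + ρ) / s ^ 2 := by
    rw [div_sub_div _ _ hsM.ne' hs.ne', div_le_div_iff₀ (by positivity) (by positivity)]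
    nlinarith [mul_nonneg (mul_nonneg hM.le hM.le) (mul_nonneg hs.le (by linarith : 0 ≤ s - 2 * M)),
      mul_nonneg (mul_nonneg hM.le hρ) (mul_nonneg hs.le hsM.le)]
  have hup' : 2 * M / s - 2 * M / (s + M + ρ) ≤ 2 * M * (2 * M + ρ) / s ^ 2 := by
    rw [div_sub_div _ _ hs.ne' (by positivity), div_le_div_iff₀ (by positivity) (by positivity)]
    have : 0 ≤ M * s * (M * s + (2 * M + ρ) * (M + ρ)) := by positivity
    nlinarith
  rw [← sq_abs y, abs_le]
  constructor <;> linarith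

lemma abs_schwOmega_add_schwOmega_add_le {M x ρ t : ℝ} (hM : 0 < M) (hρ : 0 ≤ ρ)
    (ht : 2 * |x| + 4 * M ≤ t) :
    |schwOmega M (x + t) ρ + schwOmega M (x - t) ρ + 4 * M / t| ≤
      16 * M * (2 * M + ρ) / t ^ 2 + 6 * M * x ^ 2 / t ^ 3 := by
  have hx1 := neg_abs_le x
  have hx2 := le_abs_self x
  have ht0 : 0 < t := by linarith [abs_nonneg x]
  have hp : |x + t| = t + x := by rw [abs_of_pos (by linarith), add_comm]
  have hm : |x - t| = t - x := by rw [abs_sub_comm, abs_of_pos (by linarith)]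
  have hC : 0 ≤ 2 * M * (2 * M + ρ) := by positivity
  have hplus := abs_schwOmega_add_le hM hρ (y := x + t) (by rw [hp]; linarith)
  have hminus := abs_schwOmega_add_le hM hρ (y := x - t) (by rw [hm]; linarith)
  have hplus_t : 2 * M * (2 * M + ρ) / (x + t) ^ 2 ≤ 4 * (2 * M * (2 * M + ρ)) / t ^ 2 := by
    rw [div_le_div_iff₀ (by nlinarith) (by positivity)]
    nlinarith [mul_le_mul_of_nonneg_left (show t ^ 2 ≤ 4 * (x + t) ^ 2 by nlinarith) hC]
  have hminus_t : 2 * M * (2 * M + ρ) / (x - t) ^ 2 ≤ 4 * (2 * M * (2 * M + ρ)) / t ^ 2 := by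
    rw [div_le_div_iff₀ (by nlinarith) (by positivity)]
    nlinarith [mul_le_mul_of_nonneg_left (show t ^ 2 ≤ 4 * (x - t) ^ 2 by nlinarith) hC]
  have hc := abs_inv_add_inv_sub_two_div_le ht0 (x := x) (by linarith)
  rw [hp] at hplus
  rw [hm] at hminus
  have hsplit : schwOmega M (x + t) ρ + schwOmega M (x - t) ρ + 4 * M / t =
      (schwOmega M (x + t) ρ + 2 * M / (t + x)) + (schwOmega M (x - t) ρ + 2 * M / (t - x)) -
        2 * M * ((t + x)⁻¹ + (t - x)⁻¹ - 2 / t) := by ring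
  rw [hsplit]
  calc _ ≤ |schwOmega M (x + t) ρ + 2 * M / (t + x)| + |schwOmega M (x - t) ρ + 2 * M / (t - x)| +
        2 * M * |(t + x)⁻¹ + (t - x)⁻¹ - 2 / t| := by
        refine (abs_sub _ _).trans ?_
        rw [abs_mul, abs_of_pos (by positivity : 0 < 2 * M)]
        gcongr
        exact abs_add_le _ _
    _ ≤ _ := by
        have := mul_le_mul_of_nonneg_left hc (by positivity : 0 ≤ 2 * M)
        have e1 : 16 * M * (2 * M + ρ) / t ^ 2 =
            4 * (2 * M * (2 * M + ρ)) / t ^ 2 + 4 * (2 * M * (2 * M + ρ)) / t ^ 2 := by ring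
        have e2 : 6 * M * x ^ 2 / t ^ 3 = 2 * M * (3 * x ^ 2 / t ^ 3) := by ring
        linarith

lemma summable_div_succ_mul_pow (c L : ℝ) {k : ℕ} (hk : 1 < k) :
    Summable fun n : ℕ => c / (((n : ℝ) + 1) * L) ^ k := by
  have h := (summable_nat_add_iff 1).mpr (summable_one_div_nat_pow.mpr hk)
  refine (h.mul_left (c / L ^ k)).congr fun n => ?_
  push_cast
  rw [mul_pow, div_mul_div_comm, mul_one, mul_comm (L ^ k)]

lemma summable_perOmega_summand {M L ρ : ℝ} (hM : 0 < M) (hL : 0 < L) (hρ : 0 ≤ ρ) (x : ℝ) :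
    Summable fun n : ℕ => schwOmega M (x + ((n : ℝ) + 1) * L) ρ +
      schwOmega M (x - ((n : ℝ) + 1) * L) ρ + 4 * M / (((n : ℝ) + 1) * L) := by
  have ht : Tendsto (fun n : ℕ => ((n : ℝ) + 1) * L) atTop atTop :=
    (tendsto_atTop_add_const_right _ 1 tendsto_natCast_atTop_atTop).atTop_mul_const hL
  refine Summable.of_norm_bounded_eventually_nat ((summable_div_succ_mul_pow
    (16 * M * (2 * M + ρ)) L one_lt_two).add (summable_div_succ_mul_pow (6 * M * x ^ 2) L
    (by norm_num : 1 < 3))) ?_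
  filter_upwards [ht.eventually_ge_atTop (2 * |x| + 4 * M)] with n hn
  exact abs_schwOmega_add_schwOmega_add_le hM hρ hn

lemma perE_eq_exp_perOmega {M L x ρ : ℝ} (hM : 0 < M) (hL : 0 < L) (hρ : 0 ≤ ρ)
    (h : ∀ k : ℤ, 0 < schwE M (x - k * L) ρ) : perE M L x ρ = exp (perOmega M L x ρ) := by
  have h0 : 0 < schwE M x ρ := by simpa using h 0
  have hplus (n : ℕ) : 0 < schwE M (x + ((n : ℝ) + 1) * L) ρ := by
    have := h (-(n + 1))
    push_cast at this
    rwa [neg_mul, sub_neg_eq_add] at this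
  have hminus (n : ℕ) : 0 < schwE M (x - ((n : ℝ) + 1) * L) ρ := by
    simpa using h (n + 1)
  have hlog (n : ℕ) : log (schwE M (x + ((n : ℝ) + 1) * L) ρ * schwE M (x - ((n : ℝ) + 1) * L) ρ *
      exp (4 * M / (((n : ℝ) + 1) * L))) = schwOmega M (x + ((n : ℝ) + 1) * L) ρ +
      schwOmega M (x - ((n : ℝ) + 1) * L) ρ + 4 * M / (((n : ℝ) + 1) * L) := by
    rw [log_mul (mul_pos (hplus n) (hminus n)).ne' (exp_pos _).ne',
      log_mul (hplus n).ne' (hminus n).ne', log_exp]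
    rfl
  rw [perE, perOmega, exp_add, schwOmega, exp_log h0, ← tsum_congr hlog,
    rexp_tsum_eq_tprod (fun n => mul_pos (mul_pos (hplus n) (hminus n)) (exp_pos _))
      ((summable_perOmega_summand hM hL hρ x).congr fun n => (hlog n).symm)]

lemma perE_eq_zero {M L x : ℝ} (h : ∃ n : ℤ, |x - n * L| ≤ M) : perE M L x 0 = 0 := by
  obtain ⟨(_ | m) | m, hn⟩ := h
  · rw [perE, schwE_eq_zero (by simpa using hn), zero_mul]
  · refine mul_eq_zero_of_right _ (tprod_of_exists_eq_zero ⟨m, ?_⟩)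
    rw [schwE_eq_zero (y := x - ((m : ℝ) + 1) * L) (by simpa using hn), mul_zero, zero_mul]
  · refine mul_eq_zero_of_right _ (tprod_of_exists_eq_zero ⟨m, ?_⟩)
    rw [Int.cast_negSucc, neg_mul, sub_neg_eq_add] at hn
    rw [schwE_eq_zero (y := x + ((m : ℝ) + 1) * L) (by exact_mod_cast hn), zero_mul, zero_mul]

/-- For `M > 0` and `L > 2M`, the periodic Schwarzschild Ernst potential `E`
satisfies: `E(x,ρ) > 0` whenever `ρ > 0`; `E(x,0) > 0` whenever `M < |x − nL|` for all `n ∈ ℤ`;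
and `E(x,0) = 0` whenever `|x − nL| < M` for some `n ∈ ℤ` (on the event horizons). -/
theorem statement5 (M L : ℝ) (hM : 0 < M) (hL : 2*M < L) :
    (∀ x ρ : ℝ, 0 < ρ → 0 < perE M L x ρ) ∧
    (∀ x : ℝ, (∀ n : ℤ, M < |x - n * L|) → 0 < perE M L x 0) ∧
    (∀ x : ℝ, (∃ n : ℤ, |x - n * L| < M) → perE M L x 0 = 0) := by
  have hL0 : 0 < L := by linarith
  refine ⟨fun x ρ hρ => ?_, fun x hx => ?_, fun x ⟨n, hn⟩ => perE_eq_zero ⟨n, hn.le⟩⟩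
  · rw [perE_eq_exp_perOmega hM hL0 hρ.le fun k => schwE_pos hM (.inl hρ)]
    exact exp_pos _
  · rw [perE_eq_exp_perOmega hM hL0 le_rfl fun k => schwE_pos hM (.inr (hx k))]
    exact exp_pos _
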